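/- Let V be a finite-dimensional real vector space and C ⊆ V a cone that is a finite union C = ∪_{i=1}^N Cᵢ of closed convex polyhedral cones Cᵢ with pairwise disjoint interiors, such that each codimension-1 face of each Cᵢ is either shared with exactly one other Cⱼ or lies in the boundary of C. If C is convex and D ∈ C, then there is a finite sequence C_{i₀}, C_{i₁}, …, C_{i_r} with D ∈ C_{i_r}, consecutive cones sharing a codimension-1 face, starting from any given C_{i₀} whose interior meets the segment from an interior point of C_{i₀} to D in general position. -/

import Mathlib

/-- A closed convex polyhedral cone in `ℝᵈ`: an intersection of finitely many
closed linear half-spaces. -/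
def IsPolyhedralCone {d : ℕ} (C : Set (Fin d → ℝ)) : Prop :=
  ∃ s : Finset ((Fin d → ℝ) →ₗ[ℝ] ℝ), C = {x | ∀ f ∈ s, 0 ≤ f x}

/-!
Call two chambers adjacent when their intersection spans a hyperplane. Distinct chambers meet in a
convex cone with empty interior, which therefore spans a proper subspace; for a non-adjacent pair
this span has codimension at least two. Choose `x` in the interior of one chamber off all these
spans, and `y` in the interior of another off their sums with `ℝ ∙ x`; then the segment `[x, y]`,
which lies in the convex union, meets none of these spans. If the second chamber were not reachable
from the first by adjacency, the reachable chambers and the remaining ones would cover `[x, y]` by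
two closed sets each meeting it, so by connectedness some point of the segment would lie in a
reachable and in an unreachable chamber, and these two would have to be adjacent.
-/

open Set Module Submodule Relation

namespace IsPolyhedralCone

variable {d : ℕ} {S : Set (Fin d → ℝ)}

lemma eq_iInter (h : IsPolyhedralCone S) :
    ∃ s : Finset ((Fin d → ℝ) →ₗ[ℝ] ℝ), S = ⋂ f ∈ s, f ⁻¹' Ici 0 := by
  obtain ⟨s, rfl⟩ := h
  exact ⟨s, by ext; simp⟩

lemma isClosed (h : IsPolyhedralCone S) : IsClosed S := by
  obtain ⟨s, rfl⟩ := h.eq_iInter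
  exact isClosed_biInter fun f _ => isClosed_Ici.preimage f.continuous_of_finiteDimensional

lemma convex (h : IsPolyhedralCone S) : Convex ℝ S := by
  obtain ⟨s, rfl⟩ := h.eq_iInter
  exact convex_iInter₂ fun f _ => (convex_Ici 0).linear_preimage f

lemma zero_mem (h : IsPolyhedralCone S) : (0 : Fin d → ℝ) ∈ S := by
  obtain ⟨s, rfl⟩ := h
  simp

end IsPolyhedralCone

lemma Relation.ReflTransGen.exists_seq {α : Type*} {R : α → α → Prop} {a b : α}
    (h : ReflTransGen R a b) :
    ∃ (r : ℕ) (seq : ℕ → α), seq 0 = a ∧ seq r = b ∧ ∀ l < r, R (seq l) (seq (l + 1)) := by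
  induction h with
  | refl => exact ⟨0, fun _ => a, rfl, rfl, by simp⟩
  | @tail b c _ hbc ih =>
    obtain ⟨r, seq, h0, hr, hseq⟩ := ih
    refine ⟨r + 1, fun n => if n ≤ r then seq n else c, by simpa using h0, by simp, ?_⟩
    intro l hl
    rcases Nat.lt_succ_iff_lt_or_eq.1 hl with hl | rfl
    · simpa [hl.le, Nat.succ_le_of_lt hl] using hseq l hl
    · simpa [hr] using hbc

lemma IsPreconnected.exists_mem_inter_of_isClosed_cover {X ι : Type*} [TopologicalSpace X]
    [Finite ι] {P : Set X} (hP : IsPreconnected P) {C : ι → Set X}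
    (hC : ∀ i, IsClosed (C i)) (hcov : P ⊆ ⋃ i, C i) {S : Set ι} {i j : ι} {x y : X}
    (hi : i ∈ S) (hj : j ∉ S) (hx : x ∈ P ∩ C i) (hy : y ∈ P ∩ C j) :
    ∃ w ∈ P, ∃ k ∈ S, ∃ l ∉ S, w ∈ C k ∧ w ∈ C l := by
  have hcl : ∀ T : Set ι, IsClosed (⋃ k ∈ T, C k) := fun T =>
    T.toFinite.isClosed_biUnion fun k _ => hC k
  have hcovS : P ⊆ (⋃ k ∈ S, C k) ∪ ⋃ k ∈ Sᶜ, C k := by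
    intro w hw
    obtain ⟨k, hk⟩ := mem_iUnion.1 (hcov hw)
    by_cases hkS : k ∈ S
    · exact Or.inl (mem_biUnion hkS hk)
    · exact Or.inr (mem_biUnion hkS hk)
  obtain ⟨w, hwP, hwS, hwS'⟩ := isPreconnected_closed_iff.1 hP _ _ (hcl S) (hcl Sᶜ) hcovS
    ⟨x, hx.1, mem_biUnion hi hx.2⟩ ⟨y, hy.1, mem_biUnion hj hy.2⟩
  obtain ⟨k, hk, hwk⟩ := mem_iUnion₂.1 hwS
  obtain ⟨l, hl, hwl⟩ := mem_iUnion₂.1 hwS'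
  exact ⟨w, hwP, k, hk, l, hl, hwk, hwl⟩

section Subspaces

variable {E : Type*} [NormedAddCommGroup E] [NormedSpace ℝ E] [FiniteDimensional ℝ E]

lemma IsOpen.exists_mem_forall_notMem_of_ne_top {ι : Type*} [Finite ι] {V : Set E}
    (hV : IsOpen V) (hne : V.Nonempty) (F : ι → Submodule ℝ E) (hF : ∀ i, F i ≠ ⊤) :
    ∃ x ∈ V, ∀ i, x ∉ F i := by
  have hdense : Dense (⋂ i, (F i : Set E)ᶜ) := by
    refine dense_iInter_of_isOpen (fun i => (F i).closed_of_finiteDimensional.isOpen_compl)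
      fun i => interior_eq_empty_iff_dense_compl.1 ?_
    by_contra h
    exact hF i ((F i).eq_top_of_nonempty_interior' (nonempty_iff_ne_empty.2 h))
  obtain ⟨x, hxV, hx⟩ := hdense.inter_open_nonempty V hV hne
  exact ⟨x, hxV, by simpa using hx⟩

lemma Convex.interior_nonempty_of_span_eq_top {s : Set E} (hs : Convex ℝ s) (h0 : 0 ∈ s)
    (h : span ℝ s = ⊤) : (interior s).Nonempty := by
  rw [hs.interior_nonempty_iff_affineSpan_eq_top,
    AffineSubspace.affineSpan_eq_top_iff_vectorSpan_eq_top_of_nonempty ℝ _ _ ⟨0, h0⟩,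
    vectorSpan_eq_span_vsub_set_right ℝ h0]
  simpa using h

lemma finrank_span_inter_lt {s t : Set E} (hs : Convex ℝ s) (ht : Convex ℝ t)
    (hs0 : 0 ∈ s) (ht0 : 0 ∈ t) (hst : interior s ∩ interior t = ∅) :
    finrank ℝ (span ℝ (s ∩ t)) < finrank ℝ E := by
  refine Submodule.finrank_lt fun h => ?_
  have := (hs.inter ht).interior_nonempty_of_span_eq_top ⟨hs0, ht0⟩ h
  rw [interior_inter, hst] at this
  exact this.ne_empty rfl

end Subspaces

lemma Submodule.sup_span_singleton_ne_top {K E : Type*} [DivisionRing K] [AddCommGroup E]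
    [Module K E] [FiniteDimensional K E] {F : Submodule K E}
    (hF : finrank K F + 2 ≤ finrank K E) (x : E) : F ⊔ K ∙ x ≠ ⊤ := by
  intro h
  have hsup := Submodule.finrank_add_le_finrank_add_finrank F (K ∙ x)
  have hx : finrank K (K ∙ x) ≤ 1 := by
    simpa using finrank_span_le_card (R := K) ({x} : Set E)
  rw [h, finrank_top] at hsup
  omega

lemma segment_notMem_submodule {K E : Type*} [Field K] [LinearOrder K] [IsStrictOrderedRing K]
    [AddCommGroup E] [Module K E] {F : Submodule K E} {x y w : E} (hx : x ∉ F)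
    (hy : y ∉ F ⊔ K ∙ x) (hw : w ∈ segment K x y) : w ∉ F := by
  obtain ⟨a, b, ha, hb, hab, rfl⟩ := hw
  intro hwF
  rcases hb.eq_or_lt with rfl | hb
  · obtain rfl : a = 1 := by linarith
    exact hx (by simpa using hwF)
  · refine hy ?_
    have hby : b • y ∈ F ⊔ K ∙ x := by
      simpa using (F ⊔ K ∙ x).sub_mem (mem_sup_left hwF)
        (mem_sup_right (smul_mem _ a (mem_span_singleton_self x)))
    simpa [smul_smul, inv_mul_cancel₀ hb.ne'] using Submodule.smul_mem _ b⁻¹ hby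

theorem reflTransGen_finrank_span_inter_eq {E ι : Type*} [NormedAddCommGroup E]
    [NormedSpace ℝ E] [FiniteDimensional ℝ E] [Finite ι] {C : ι → Set E}
    (hclosed : ∀ i, IsClosed (C i)) (hconvex : ∀ i, Convex ℝ (C i)) (hzero : ∀ i, 0 ∈ C i)
    (hfull : ∀ i, (interior (C i)).Nonempty)
    (hdisj : ∀ i j, i ≠ j → interior (C i) ∩ interior (C j) = ∅)
    (hconv : Convex ℝ (⋃ i, C i)) (i j : ι) :
    ReflTransGen (fun k l => finrank ℝ (span ℝ (C k ∩ C l)) = finrank ℝ E - 1) i j := by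
  set wall := fun k l => finrank ℝ (span ℝ (C k ∩ C l)) = finrank ℝ E - 1
  by_contra hij
  let F : {p : ι × ι // finrank ℝ (span ℝ (C p.1 ∩ C p.2)) + 2 ≤ finrank ℝ E} → Submodule ℝ E :=
    fun p => span ℝ (C p.1.1 ∩ C p.1.2)
  obtain ⟨x, hx, hxF⟩ := isOpen_interior.exists_mem_forall_notMem_of_ne_top (hfull i) F
    fun p => ne_top_of_le_ne_top (sup_span_singleton_ne_top p.2 0) le_sup_left
  obtain ⟨y, hy, hyF⟩ := isOpen_interior.exists_mem_forall_notMem_of_ne_top (hfull j)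
    (fun p => F p ⊔ ℝ ∙ x) fun p => sup_span_singleton_ne_top p.2 x
  obtain ⟨w, hw, k, hk, l, hl, hwk, hwl⟩ :=
    (convex_segment x y).isPreconnected.exists_mem_inter_of_isClosed_cover hclosed
      (hconv.segment_subset (mem_iUnion_of_mem i (interior_subset hx))
        (mem_iUnion_of_mem j (interior_subset hy)))
      (S := {k | ReflTransGen wall i k}) ReflTransGen.refl hij
      ⟨left_mem_segment ℝ x y, interior_subset hx⟩ ⟨right_mem_segment ℝ x y, interior_subset hy⟩
  have hkl : k ≠ l := fun h => hl (h ▸ hk)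
  have hlt := finrank_span_inter_lt (hconvex k) (hconvex l) (hzero k) (hzero l) (hdisj k l hkl)
  rcases (by omega : wall k l ∨ finrank ℝ (span ℝ (C k ∩ C l)) + 2 ≤ finrank ℝ E)
    with hwall | hbad
  · exact hl (hk.tail hwall)
  · exact segment_notMem_submodule (hxF ⟨(k, l), hbad⟩) (hyF ⟨(k, l), hbad⟩) hw
      (subset_span ⟨hwk, hwl⟩)

/-- Chamber-crossing in a cone decomposed into finitely many chambers.
Let `C = ⋃ᵢ Cᵢ` be a union of finitely many full-dimensional closed convex
polyhedral cones in `ℝᵈ` with pairwise disjoint interiors, whose union is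
convex.  Then for any chamber `C_{i₀}` and any point `D ∈ C`, there is a finite
sequence of chambers `C_{i₀} = C_{seq 0}, C_{seq 1}, …, C_{seq r}` with
`D ∈ C_{seq r}`, consecutive chambers sharing a codimension-one face (a wall):
their intersection spans a subspace of dimension `d − 1`. -/
theorem stmt_18 (d N : ℕ) (C : Fin N → Set (Fin d → ℝ))
    (hpoly : ∀ i, IsPolyhedralCone (C i))
    (hfull : ∀ i, (interior (C i)).Nonempty)
    (hdisj : ∀ i j, i ≠ j → interior (C i) ∩ interior (C j) = ∅)
    (hconv : Convex ℝ (⋃ i, C i))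
    (i₀ : Fin N) (D : Fin d → ℝ) (hD : D ∈ ⋃ i, C i) :
    ∃ (r : ℕ) (seq : ℕ → Fin N), seq 0 = i₀ ∧ D ∈ C (seq r) ∧
      ∀ l < r, Module.finrank ℝ
        (Submodule.span ℝ (C (seq l) ∩ C (seq (l + 1)))) = d - 1 := by
  obtain ⟨j, hDj⟩ := mem_iUnion.1 hD
  have hpath := reflTransGen_finrank_span_inter_eq (fun i => (hpoly i).isClosed)
    (fun i => (hpoly i).convex) (fun i => (hpoly i).zero_mem) hfull hdisj hconv i₀ j
  rw [finrank_fin_fun] at hpath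
  obtain ⟨r, seq, h0, hr, hseq⟩ := hpath.exists_seq
  exact ⟨r, seq, h0, hr ▸ hDj, hseq⟩
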